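/- There exist constants C, c > 0 depending only on α and C₀ such that for any j ≥ 1 with m_j ≤ n, with probability at least 1 − C exp(−c j²), one has inf_{s ≥ a_j} ( (1/2) c_{m_j} e^{m_j s} |ε_{m_j}| − Σ_{0 ≤ i < m_j} |ε_i| c_i e^{i s} ) > 0. -/

import Mathlib

open MeasureTheory ProbabilityTheory Filter
open scoped Classical

noncomputable section

/-- `mseq α j = 2⌊j^(1/α)⌋`, the sequence `m_j` from the construction. -/
def mseq (α : ℝ) (j : ℕ) : ℕ := 2 * ⌊(j : ℝ) ^ (1 / α)⌋₊

/-- The index `j` of the block `I_j = (m_(j-1), m_j]` containing `k`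
(with the convention `m_(-1) = -1`). -/
def blockIdx (α : ℝ) (k : ℕ) : ℕ := sInf {j : ℕ | k ≤ mseq α j}

/-- The deterministic coefficient sequence: `c_k = exp (-2^j)` for `k ∈ I_j`. -/
def cseq (α : ℝ) (k : ℕ) : ℝ := Real.exp (-(2 : ℝ) ^ blockIdx α k)

/-- `j_* = max {j : I_j ∩ {0,…,n} ≠ ∅}`, the index of the block containing `n`. -/
def jStar (α : ℝ) (n : ℕ) : ℕ := blockIdx α n

/-- `β = min {1/2, (1-α)/(2α)}`. -/
def betaC (α : ℝ) : ℝ := min (1 / 2) ((1 - α) / (2 * α))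

/-- `a_j = α j^(1-1/α) 2^(j-2) (1 + j^(-β))`. -/
def aseq (α : ℝ) (j : ℕ) : ℝ :=
  α * (j : ℝ) ^ (1 - 1 / α) * (2 : ℝ) ^ ((j : ℤ) - 2) * (1 + (j : ℝ) ^ (-betaC α))

/-- `b_j = α j^(1-1/α) 2^(j-1) (1 - j^(-β))`. -/
def bseq (α : ℝ) (j : ℕ) : ℝ :=
  α * (j : ℝ) ^ (1 - 1 / α) * (2 : ℝ) ^ ((j : ℤ) - 1) * (1 - (j : ℝ) ^ (-betaC α))

/-- `φ_j(t) = c_(m_j) e^(t m_j)` with `c_(m_j) = exp (-2^j)`. -/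
def phi (α : ℝ) (j : ℕ) (t : ℝ) : ℝ := Real.exp (-(2 : ℝ) ^ j) * Real.exp (t * mseq α j)

/-- `g_n(t) = f_n(e^t) = ∑_{k=0}^n c_k ε_k e^{tk}`. -/
def gval (α : ℝ) {Ω : Type*} (ε : ℕ → Ω → ℝ) (n : ℕ) (ω : Ω) (t : ℝ) : ℝ :=
  ∑ k ∈ Finset.range (n + 1), cseq α k * ε k ω * Real.exp (t * k)

/-- `R_n`: the number of real roots of `f_n(z) = ∑_{k=0}^n c_k ε_k z^k`
(counted without multiplicity). -/
def Rroots (α : ℝ) {Ω : Type*} (ε : ℕ → Ω → ℝ) (n : ℕ) (ω : Ω) : ℕ :=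
  Set.ncard {t : ℝ | ∑ k ∈ Finset.range (n + 1), cseq α k * ε k ω * t ^ k = 0}

/-- `S_n`: the number of sign changes among `(ε_(m_0), …, ε_(m_(j_*-1)), ε_n)`. -/
def Schanges (α : ℝ) {Ω : Type*} (ε : ℕ → Ω → ℝ) (n : ℕ) (ω : Ω) : ℕ :=
  ((Finset.range (jStar α n)).filter fun j =>
    ε (mseq α j) ω * (if j + 1 < jStar α n then ε (mseq α (j + 1)) ω else ε n ω) < 0).card

/-!
Since `c_i = exp (-2^l)` on the block `I_l`, for `s ≥ a_j` each term `c_i e^{is}` with `i < m_j`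
is at most `e^{-4j²} c_{m_j} e^{m_j s}` as soon as `a_j ≥ 4j²` and
`(m_j - m_l) a_j ≥ 2^j - 2^l + 4j²` for all `l < j`. Both hold for large `j`: by convexity of
`x ↦ x^{1/α}`, `(m_j - m_{j-1}) a_j ≈ 2^{j-1} (1 + j^{-β})`, and the relative errors `O(1/j)`,
`O(j^{1-1/α})` and `O(j² 2^{-j})` are all `o(j^{-β})`. The inequality then holds on
`{|ε_{m_j}| > e^{-j²}} ∩ {∑_{i<m_j} |ε_i| ≤ e^{2j²}}`, whose complement has probability at most
`C₀ e^{-j²} + m_j e^{-2j²}` by the small-ball bound and Markov's inequality; the finitely many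
small `j` are absorbed into `C`.
-/

open Real Topology

lemma eventually_mul_rpow_le_rpow (c : ℝ) {p r : ℝ} (hpr : p < r) :
    ∀ᶠ j : ℕ in atTop, c * (j : ℝ) ^ p ≤ (j : ℝ) ^ r := by
  have hlarge : ∀ᶠ j : ℕ in atTop, c ≤ (j : ℝ) ^ (r - p) :=
    tendsto_natCast_atTop_atTop.eventually
      ((tendsto_rpow_atTop (sub_pos.2 hpr)).eventually_ge_atTop c)
  filter_upwards [hlarge, eventually_gt_atTop 0] with j hj hj0
  have hj0' : (0 : ℝ) < j := Nat.cast_pos.2 hj0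
  calc c * (j : ℝ) ^ p ≤ (j : ℝ) ^ (r - p) * (j : ℝ) ^ p := by gcongr
    _ = (j : ℝ) ^ r := by rw [← rpow_add hj0', sub_add_cancel]

lemma eventually_mul_rpow_le_two_pow (c p : ℝ) :
    ∀ᶠ j : ℕ in atTop, c * (j : ℝ) ^ p ≤ 2 ^ j := by
  have hlim : Tendsto (fun x : ℝ => c * (x ^ p * exp (-log 2 * x))) atTop (𝓝 0) := by
    simpa using
      (tendsto_rpow_mul_exp_neg_mul_atTop_nhds_zero p (log 2) (log_pos one_lt_two)).const_mul c
  filter_upwards [tendsto_natCast_atTop_atTop.eventually (hlim.eventually_le_const one_pos)]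
    with j hj
  have h2j : (2 : ℝ) ^ j = exp (log 2 * j) := by
    rw [← rpow_natCast, rpow_def_of_pos two_pos]
  rw [neg_mul, exp_neg, ← mul_assoc, ← div_eq_mul_inv, div_le_one (exp_pos _)] at hj
  rwa [h2j]

lemma mseq_le_two_mul_rpow (α : ℝ) (j : ℕ) : (mseq α j : ℝ) ≤ 2 * (j : ℝ) ^ (1 / α) := by
  have := Nat.floor_le (rpow_nonneg (Nat.cast_nonneg j) (1 / α))
  simp only [mseq, Nat.cast_mul, Nat.cast_ofNat]
  linarith

lemma two_mul_rpow_sub_two_le_mseq (α : ℝ) (j : ℕ) :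
    2 * (j : ℝ) ^ (1 / α) - 2 ≤ (mseq α j : ℝ) := by
  have := Nat.lt_floor_add_one ((j : ℝ) ^ (1 / α))
  simp only [mseq, Nat.cast_mul, Nat.cast_ofNat]
  linarith

lemma mseq_mono {α : ℝ} (hα : 0 ≤ α) : Monotone (mseq α) := fun a b hab =>
  Nat.mul_le_mul_left 2 <| Nat.floor_le_floor <|
    rpow_le_rpow (Nat.cast_nonneg a) (Nat.cast_le.2 hab) (by positivity)

lemma self_le_mseq {α : ℝ} (hα0 : 0 < α) (hα1 : α ≤ 1) (k : ℕ) : k ≤ mseq α k := by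
  rcases Nat.eq_zero_or_pos k with rfl | hk
  · exact Nat.zero_le _
  have hk_le : (k : ℝ) ≤ (k : ℝ) ^ (1 / α) := by
    conv_lhs => rw [← rpow_one (k : ℝ)]
    exact rpow_le_rpow_of_exponent_le (Nat.one_le_cast.2 hk) (one_le_one_div hα0 hα1)
  have := Nat.le_floor hk_le
  unfold mseq
  omega

lemma le_mseq_blockIdx {α : ℝ} (hα0 : 0 < α) (hα1 : α ≤ 1) (k : ℕ) :
    k ≤ mseq α (blockIdx α k) :=
  Nat.sInf_mem (s := {j | k ≤ mseq α j}) ⟨k, self_le_mseq hα0 hα1 k⟩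

lemma blockIdx_le_of_le_mseq {α : ℝ} {k j : ℕ} (h : k ≤ mseq α j) : blockIdx α k ≤ j :=
  Nat.sInf_le h

lemma rpow_one_sub_le {q x : ℝ} (hq : 1 ≤ q) (hx0 : 0 ≤ x) (hx1 : x ≤ 1) :
    (1 - x) ^ q ≤ 1 - q * x + (q * x) ^ 2 := by
  have hqx : 0 ≤ q * x := by positivity
  have hbern : 1 + q * x ≤ (1 + x) ^ q := one_add_mul_self_le_rpow_one_add (by linarith) hq
  have hprod : (1 + q * x) * (1 - x) ^ q ≤ 1 :=
    calc (1 + q * x) * (1 - x) ^ q ≤ (1 + x) ^ q * (1 - x) ^ q := by gcongr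
      _ = (1 - x ^ 2) ^ q := by rw [← mul_rpow (by linarith) (by linarith)]; ring_nf
      _ ≤ 1 := rpow_le_one (by nlinarith) (by nlinarith) (by linarith)
  nlinarith [rpow_nonneg (by linarith : (0 : ℝ) ≤ 1 - x) q, mul_nonneg (pow_nonneg hqx 3)
    (rpow_nonneg (by linarith : (0 : ℝ) ≤ 1 - x) q)]

lemma mseq_sub_mseq_ge {α : ℝ} (hα0 : 0 < α) (hα1 : α ≤ 1) {l j : ℕ} (hlj : l ≤ j) (hj : 0 < j) :
    2 * (1 / α) * (j - l) * (j : ℝ) ^ (1 / α - 1) * (1 - 1 / α * (j - l) / j) - 2 ≤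
      (mseq α j : ℝ) - mseq α l := by
  set q := 1 / α
  have hq : 1 ≤ q := one_le_one_div hα0 hα1
  have hj' : (0 : ℝ) < j := Nat.cast_pos.2 hj
  have hlj' : (l : ℝ) ≤ j := Nat.cast_le.2 hlj
  set x := ((j : ℝ) - l) / j with hx
  have hx0 : 0 ≤ x := div_nonneg (by linarith) hj'.le
  have hx1 : x ≤ 1 := (div_le_one hj').2 (by linarith [(Nat.cast_nonneg l : (0 : ℝ) ≤ l)])
  have hl : (l : ℝ) = j * (1 - x) := by rw [hx]; field_simp; ring
  have hpow : (l : ℝ) ^ q ≤ (j : ℝ) ^ q * (1 - q * x + (q * x) ^ 2) := by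
    rw [hl, mul_rpow hj'.le (by linarith)]
    exact mul_le_mul_of_nonneg_left (rpow_one_sub_le hq hx0 hx1) (by positivity)
  have hjq : (j : ℝ) ^ q * x = (j - l) * (j : ℝ) ^ (q - 1) := by
    rw [rpow_sub_one hj'.ne', hx]; ring
  have hm := two_mul_rpow_sub_two_le_mseq α j
  have hm' := mseq_le_two_mul_rpow α l
  have key : 2 * q * (j - l) * (j : ℝ) ^ (q - 1) * (1 - q * (j - l) / j) =
      2 * ((j : ℝ) ^ q * (q * x) - (j : ℝ) ^ q * (q * x) ^ 2) := by
    rw [show q * ((j : ℝ) - l) / j = q * x by rw [hx]; ring]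
    linear_combination (2 * q * (1 - q * x)) * hjq.symm
  linarith

lemma aseq_eq (α : ℝ) (j : ℕ) :
    aseq α j = α * (j : ℝ) ^ (1 - 1 / α) * (2 ^ j / 4) * (1 + (j : ℝ) ^ (-betaC α)) := by
  rw [aseq, zpow_sub₀ two_ne_zero, zpow_natCast]
  norm_num

lemma aseq_nonneg {α : ℝ} (hα : 0 ≤ α) (j : ℕ) : 0 ≤ aseq α j := by
  rw [aseq_eq]; positivity

lemma betaC_pos {α : ℝ} (hα0 : 0 < α) (hα1 : α < 1) : 0 < betaC α :=
  lt_min (by norm_num) (div_pos (by linarith) (by linarith))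

lemma betaC_lt_one {α : ℝ} : betaC α < 1 := (min_le_left _ _).trans_lt (by norm_num)

lemma betaC_lt_one_div_sub_one {α : ℝ} (hα0 : 0 < α) (hα1 : α < 1) : betaC α < 1 / α - 1 := by
  have h : (1 - α) / (2 * α) = (1 / α - 1) / 2 := by field_simp
  have hq : 0 < 1 / α - 1 := by rw [sub_pos, lt_one_div one_pos hα0]; simpa
  exact (min_le_right _ _).trans_lt (by rw [h]; linarith)

lemma mul_aseq_le_mseq_sub_mul_aseq {α : ℝ} (hα0 : 0 < α) (hα1 : α ≤ 1) {l j : ℕ} (hlj : l < j)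
    (hjl : j ≤ l + 2) :
    (j - l) * (2 ^ j / 2) * (1 + (j : ℝ) ^ (-betaC α)) *
        (1 - (2 * (1 / α) / j + α * (j : ℝ) ^ (1 - 1 / α))) ≤
      ((mseq α j : ℝ) - mseq α l) * aseq α j := by
  have hM := mseq_sub_mseq_ge hα0 hα1 hlj.le ((Nat.zero_le l).trans_lt hlj)
  have ha := aseq_nonneg hα0.le j
  rw [aseq_eq] at ha ⊢
  set q := 1 / α
  set t := (j : ℝ) ^ (-betaC α)
  set w := (j : ℝ) ^ (1 - q)
  set D : ℝ := j - l
  have hj : (0 : ℝ) < j := by exact_mod_cast (Nat.zero_le l).trans_lt hlj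
  have hD1 : 1 ≤ D := by
    have : (l : ℝ) + 1 ≤ j := by exact_mod_cast hlj
    linarith
  have hD2 : D ≤ 2 := by
    have : (j : ℝ) ≤ l + 2 := by exact_mod_cast hjl
    linarith
  have hαq : α * q = 1 := by simp only [q]; field_simp
  have huw : (j : ℝ) ^ (q - 1) * w = 1 := by
    rw [← rpow_add hj, show q - 1 + (1 - q) = 0 by ring, rpow_zero]
  have hbracket : 2 * D * (1 - (2 * q / j + α * w)) ≤ 2 * D * (1 - q * D / j) - 2 * α * w := by
    have hsplit : 2 * D * (1 - q * D / j) - 2 * α * w - 2 * D * (1 - (2 * q / j + α * w)) =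
        2 * D * q * (2 - D) / j + 2 * α * w * (D - 1) := by field_simp; ring
    have : 0 ≤ 2 * D * q * (2 - D) / j := by
      have : 0 ≤ 2 - D := by linarith
      positivity
    have : 0 ≤ 2 * α * w * (D - 1) := by
      have : 0 ≤ D - 1 := by linarith
      positivity
    linarith
  calc D * (2 ^ j / 2) * (1 + t) * (1 - (2 * q / j + α * w))
      = 2 ^ j / 4 * (1 + t) * (2 * D * (1 - (2 * q / j + α * w))) := by ring
    _ ≤ 2 ^ j / 4 * (1 + t) * (2 * D * (1 - q * D / j) - 2 * α * w) := by gcongr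
    _ = (2 * q * D * (j : ℝ) ^ (q - 1) * (1 - q * D / j) - 2) *
        (α * w * (2 ^ j / 4) * (1 + t)) := by
      linear_combination (-(2 ^ j / 4) * (1 + t) * 2 * D * (1 - q * D / j)) *
        ((j : ℝ) ^ (q - 1) * w * hαq + huw)
    _ ≤ ((mseq α j : ℝ) - mseq α l) * (α * w * (2 ^ j / 4) * (1 + t)) := by gcongr

lemma eventually_error_le_rpow_neg_betaC {α : ℝ} (hα0 : 0 < α) (hα1 : α < 1) :
    ∀ᶠ j : ℕ in atTop, 2 * (2 * (1 / α) / j + α * (j : ℝ) ^ (1 - 1 / α)) + 8 * j ^ 2 / 2 ^ j ≤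
      (j : ℝ) ^ (-betaC α) := by
  have hβ0 := betaC_pos hα0 hα1
  filter_upwards [eventually_mul_rpow_le_rpow (12 * (1 / α)) (neg_lt_neg (betaC_lt_one (α := α))),
    eventually_mul_rpow_le_rpow (6 * α) (by linarith [betaC_lt_one_div_sub_one hα0 hα1] :
      1 - 1 / α < -betaC α),
    eventually_mul_rpow_le_two_pow 24 (2 + betaC α), eventually_gt_atTop 0]
    with j h1 h2 h3 hj
  have hj' : (0 : ℝ) < j := Nat.cast_pos.2 hj
  set t := (j : ℝ) ^ (-betaC α)
  have h1' : 4 * (1 / α) / j ≤ t / 3 := by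
    rw [rpow_neg_one] at h1
    rw [div_eq_mul_inv]
    linarith
  have h3' : 8 * (j : ℝ) ^ 2 / 2 ^ j ≤ t / 3 := by
    have hsplit : (j : ℝ) ^ (2 + betaC α) * t = (j : ℝ) ^ 2 := by
      rw [← rpow_add hj', add_neg_cancel_right, rpow_two]
    have : 24 * (j : ℝ) ^ 2 ≤ 2 ^ j * t := by
      rw [← hsplit, ← mul_assoc]
      exact mul_le_mul_of_nonneg_right h3 (by positivity)
    rw [div_le_div_iff₀ (by positivity) (by norm_num)]
    linarith
  have h2' : 2 * (α * (j : ℝ) ^ (1 - 1 / α)) ≤ t / 3 := by linarith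
  have h1'' : 2 * (2 * (1 / α) / j) ≤ t / 3 := by rw [← mul_div_assoc, ← mul_assoc]; linarith
  linarith

lemma eventually_sq_le_aseq {α : ℝ} (hα0 : 0 < α) :
    ∀ᶠ j : ℕ in atTop, 4 * (j : ℝ) ^ 2 ≤ aseq α j := by
  filter_upwards [eventually_mul_rpow_le_two_pow (16 / α) (1 / α + 1), eventually_gt_atTop 0]
    with j hj hj0
  have hj' : (0 : ℝ) < j := Nat.cast_pos.2 hj0
  have hprod : (j : ℝ) ^ (1 - 1 / α) * (j : ℝ) ^ (1 / α + 1) = (j : ℝ) ^ 2 := by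
    rw [← rpow_add hj', show 1 - 1 / α + (1 / α + 1) = 2 by ring, rpow_two]
  have ht : 0 ≤ (j : ℝ) ^ (-betaC α) := rpow_nonneg hj'.le _
  rw [aseq_eq]
  calc 4 * (j : ℝ) ^ 2
      = α * (j : ℝ) ^ (1 - 1 / α) * ((16 / α) * (j : ℝ) ^ (1 / α + 1) / 4) * 1 := by
        rw [← hprod]; field_simp; norm_num
    _ ≤ α * (j : ℝ) ^ (1 - 1 / α) * (2 ^ j / 4) * (1 + (j : ℝ) ^ (-betaC α)) := by
        gcongr; linarith

lemma eventually_two_pow_add_sq_le {α : ℝ} (hα0 : 0 < α) (hα1 : α < 1) :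
    ∀ᶠ j : ℕ in atTop, (2 : ℝ) ^ j + 8 * j ^ 2 ≤
      2 ^ j * ((1 + (j : ℝ) ^ (-betaC α)) *
        (1 - (2 * (1 / α) / j + α * (j : ℝ) ^ (1 - 1 / α)))) := by
  filter_upwards [eventually_error_le_rpow_neg_betaC hα0 hα1, eventually_gt_atTop 0]
    with j hslack hj
  set t := (j : ℝ) ^ (-betaC α)
  set δ := 2 * (1 / α) / j + α * (j : ℝ) ^ (1 - 1 / α)
  have ht1 : t ≤ 1 := rpow_le_one_of_one_le_of_nonpos (Nat.one_le_cast.2 hj)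
    (by linarith [betaC_pos hα0 hα1])
  have hδ : 0 ≤ δ := by positivity
  have h8 : 8 * (j : ℝ) ^ 2 = 2 ^ j * (8 * j ^ 2 / 2 ^ j) := by field_simp
  rw [h8, ← mul_one_add (2 ^ j : ℝ)]
  gcongr
  nlinarith

/-- For `l = j - 1` the jump `2^j - 2^l` is matched only thanks to the factor `1 + j^(-β)` in `a_j`;
for `l ≤ j - 2` it is enough to compare with `l = j - 2`. -/
lemma eventually_two_pow_sub_le_mseq_sub_mul_aseq {α : ℝ} (hα0 : 0 < α) (hα1 : α < 1) :
    ∀ᶠ j : ℕ in atTop, ∀ l < j,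
      (2 : ℝ) ^ j - 2 ^ l + 4 * j ^ 2 ≤ ((mseq α j : ℝ) - mseq α l) * aseq α j := by
  filter_upwards [eventually_two_pow_add_sq_le hα0 hα1, eventually_ge_atTop 2] with j hcore hj2
  set t := (j : ℝ) ^ (-betaC α)
  set δ := 2 * (1 / α) / j + α * (j : ℝ) ^ (1 - 1 / α)
  intro l hl
  rcases (show l + 1 = j ∨ l + 2 ≤ j by omega) with hl1 | hl2
  · have hgap := mul_aseq_le_mseq_sub_mul_aseq hα0 hα1.le hl (by omega)
    have hD : (j : ℝ) - l = 1 := by rw [← hl1]; push_cast; ring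
    have h2l : (2 : ℝ) ^ j = 2 * 2 ^ l := by rw [← hl1, pow_succ]; ring
    rw [hD, one_mul] at hgap
    calc (2 : ℝ) ^ j - 2 ^ l + 4 * j ^ 2 = (2 ^ j + 8 * j ^ 2) / 2 := by rw [h2l]; ring
      _ ≤ 2 ^ j * ((1 + t) * (1 - δ)) / 2 := by linarith
      _ = 2 ^ j / 2 * (1 + t) * (1 - δ) := by ring
      _ ≤ ((mseq α j : ℝ) - mseq α l) * aseq α j := hgap
  · have hgap :=
      mul_aseq_le_mseq_sub_mul_aseq hα0 hα1.le (l := j - 2) (j := j) (by omega) (by omega)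
    have hmono : mseq α l ≤ mseq α (j - 2) := mseq_mono hα0.le (by omega)
    have hj2' : ((j - 2 : ℕ) : ℝ) = j - 2 := by push_cast [Nat.cast_sub hj2]; ring
    rw [hj2'] at hgap
    have hl0 : (0 : ℝ) ≤ 2 ^ l := by positivity
    calc (2 : ℝ) ^ j - 2 ^ l + 4 * j ^ 2 ≤ 2 ^ j * ((1 + t) * (1 - δ)) := by nlinarith
      _ = (j - (j - 2)) * (2 ^ j / 2) * (1 + t) * (1 - δ) := by ring
      _ ≤ ((mseq α j : ℝ) - mseq α (j - 2)) * aseq α j := hgap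
      _ ≤ ((mseq α j : ℝ) - mseq α l) * aseq α j := by
        have := aseq_nonneg hα0.le j
        gcongr

lemma cseq_mul_exp_le {α : ℝ} (hα0 : 0 < α) (hα1 : α ≤ 1) {j i : ℕ} {a K s : ℝ} (hK0 : 0 ≤ K)
    (hKa : K ≤ a) (hgap : ∀ l < j, (2 : ℝ) ^ j - 2 ^ l + K ≤ ((mseq α j : ℝ) - mseq α l) * a)
    (hs : a ≤ s) (hi : i < mseq α j) :
    cseq α i * exp (i * s) ≤ exp (-K) * (cseq α (mseq α j) * exp (mseq α j * s)) := by
  have hmi : (i : ℝ) + 1 ≤ mseq α j := by exact_mod_cast hi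
  have hjm : (2 : ℝ) ^ blockIdx α (mseq α j) ≤ 2 ^ j :=
    pow_le_pow_right₀ one_le_two (blockIdx_le_of_le_mseq le_rfl)
  simp only [cseq, ← exp_add]
  rw [exp_le_exp]
  rcases (blockIdx_le_of_le_mseq hi.le).lt_or_eq with hlt | heq
  · have hil : (i : ℝ) ≤ mseq α (blockIdx α i) := by exact_mod_cast le_mseq_blockIdx hα0 hα1 i
    have hlj : (mseq α (blockIdx α i) : ℝ) ≤ mseq α j := by exact_mod_cast mseq_mono hα0.le hlt.le
    have : ((mseq α j : ℝ) - mseq α (blockIdx α i)) * a ≤ (mseq α j - i) * s := by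
      gcongr <;> linarith
    linarith [hgap _ hlt]
  · have : K ≤ (mseq α j - i) * s := by nlinarith
    rw [heq]
    linarith

lemma sum_abs_mul_cseq_lt {α : ℝ} (hα0 : 0 < α) (hα1 : α ≤ 1) {j : ℕ} {a K s r R : ℝ} (hK0 : 0 ≤ K)
    (hKa : K ≤ a) (hgap : ∀ l < j, (2 : ℝ) ^ j - 2 ^ l + K ≤ ((mseq α j : ℝ) - mseq α l) * a)
    (hs : a ≤ s) {e : ℕ → ℝ} (hr : r < |e (mseq α j)|)
    (hR : ∑ i ∈ Finset.range (mseq α j), |e i| ≤ R) (hRr : 2 * R * exp (-K) ≤ r) :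
    ∑ i ∈ Finset.range (mseq α j), |e i| * cseq α i * exp (i * s) <
      cseq α (mseq α j) * exp (mseq α j * s) * |e (mseq α j)| / 2 := by
  set X := cseq α (mseq α j) * exp (mseq α j * s)
  have hX : 0 < X := mul_pos (exp_pos _) (exp_pos _)
  calc ∑ i ∈ Finset.range (mseq α j), |e i| * cseq α i * exp (i * s)
      ≤ ∑ i ∈ Finset.range (mseq α j), |e i| * (exp (-K) * X) := by
        refine Finset.sum_le_sum fun i hi => ?_
        rw [mul_assoc]
        exact mul_le_mul_of_nonneg_left
          (cseq_mul_exp_le hα0 hα1 hK0 hKa hgap hs (Finset.mem_range.1 hi)) (abs_nonneg _)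
    _ = (∑ i ∈ Finset.range (mseq α j), |e i|) * exp (-K) * X := by
        rw [mul_assoc, Finset.sum_mul]
    _ ≤ R * exp (-K) * X := by gcongr
    _ ≤ r * X / 2 := by nlinarith
    _ < X * |e (mseq α j)| / 2 := by nlinarith

lemma one_sub_le_measureReal_abs_gt_and_sum_abs_le {Ω : Type*} [MeasurableSpace Ω]
    (μ : Measure Ω) [IsProbabilityMeasure μ] (ε : ℕ → Ω → ℝ)
    (hint : ∀ k, Integrable (ε k) μ) (hmean : ∀ k, ∫ ω, |ε k ω| ∂μ ≤ 1) (m : ℕ) {r R : ℝ}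
    (hR : 0 < R) :
    1 - μ.real {ω | |ε m ω| ≤ r} - m / R ≤
      μ.real {ω | r < |ε m ω| ∧ ∑ i ∈ Finset.range m, |ε i ω| ≤ R} := by
  set F : Ω → ℝ := fun ω => ∑ i ∈ Finset.range m, |ε i ω|
  have hcover : Set.univ ⊆ {ω | r < |ε m ω| ∧ F ω ≤ R} ∪ {ω | |ε m ω| ≤ r} ∪ {ω | R ≤ F ω} := by
    intro ω _
    by_cases h1 : r < |ε m ω| <;> by_cases h2 : F ω ≤ R <;> simp_all [le_of_lt, not_le.1]
  have hunion : 1 ≤ μ.real {ω | r < |ε m ω| ∧ F ω ≤ R} + μ.real {ω | |ε m ω| ≤ r} +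
      μ.real {ω | R ≤ F ω} := by
    rw [← probReal_univ (μ := μ)]
    exact (measureReal_mono hcover).trans <|
      (measureReal_union_le _ _).trans (add_le_add_left (measureReal_union_le _ _) _)
  have hmarkov : R * μ.real {ω | R ≤ F ω} ≤ m :=
    calc R * μ.real {ω | R ≤ F ω} ≤ ∫ ω, F ω ∂μ :=
          mul_meas_ge_le_integral_of_nonneg (ae_of_all _ fun ω => by positivity)
            (integrable_finsetSum _ fun i _ => (hint i).abs) R
      _ = ∑ i ∈ Finset.range m, ∫ ω, |ε i ω| ∂μ :=
          integral_finsetSum _ fun i _ => (hint i).abs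
      _ ≤ m := by simpa using Finset.sum_le_sum fun i (_ : i ∈ Finset.range m) => hmean i
  have : μ.real {ω | R ≤ F ω} ≤ m / R := by rw [le_div_iff₀ hR]; linarith
  linarith

lemma eventually_mseq_le_exp_sq (α : ℝ) :
    ∀ᶠ j : ℕ in atTop, (mseq α j : ℝ) ≤ exp ((j : ℝ) ^ 2) := by
  filter_upwards [eventually_mul_rpow_le_two_pow 2 (1 / α)] with j hj
  calc (mseq α j : ℝ) ≤ 2 ^ j := (mseq_le_two_mul_rpow α j).trans hj
    _ ≤ exp 1 ^ j := by gcongr; linarith [add_one_le_exp (1 : ℝ)]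
    _ = exp j := by rw [← exp_nat_mul, mul_one]
    _ ≤ exp ((j : ℝ) ^ 2) := by
        gcongr
        rcases Nat.eq_zero_or_pos j with rfl | hj0
        · simp
        · nlinarith [(Nat.one_le_cast (α := ℝ)).2 hj0]

lemma two_mul_exp_mul_exp_neg_le {x : ℝ} (hx : 1 ≤ x) :
    2 * exp (2 * x) * exp (-(4 * x)) ≤ exp (-x) := by
  have h2 : 2 ≤ exp x := by linarith [add_one_le_exp x]
  rw [mul_assoc, ← exp_add, show 2 * x + -(4 * x) = -x + -x by ring, exp_add]
  calc 2 * (exp (-x) * exp (-x)) ≤ exp x * (exp (-x) * exp (-x)) := by gcongr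
    _ = exp (-x) := by rw [← mul_assoc, ← exp_add, add_neg_cancel, exp_zero, one_mul]

lemma one_sub_mul_exp_le_measureReal {α : ℝ} (hα0 : 0 < α) (hα1 : α ≤ 1) {Ω : Type*}
    [MeasurableSpace Ω] (μ : Measure Ω) [IsProbabilityMeasure μ] (ε : ℕ → Ω → ℝ)
    (hint : ∀ k, Integrable (ε k) μ) (hmean : ∀ k, ∫ ω, |ε k ω| ∂μ ≤ 1) {C₀ : ℝ}
    (hanti : ∀ k, ∀ t : ℝ, 0 ≤ t → μ.real {ω | |ε k ω| ≤ t} ≤ C₀ * t) {j : ℕ} (hj : 1 ≤ j)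
    (hK : 4 * (j : ℝ) ^ 2 ≤ aseq α j)
    (hgap : ∀ l < j, (2 : ℝ) ^ j - 2 ^ l + 4 * j ^ 2 ≤ ((mseq α j : ℝ) - mseq α l) * aseq α j)
    (hm : (mseq α j : ℝ) ≤ exp ((j : ℝ) ^ 2)) :
    1 - (C₀ + 1) * exp (-(j : ℝ) ^ 2) ≤
      μ.real {ω | ∀ s : ℝ, aseq α j ≤ s →
        0 < cseq α (mseq α j) * exp ((mseq α j : ℝ) * s) * |ε (mseq α j) ω| / 2 -
          ∑ i ∈ Finset.range (mseq α j), |ε i ω| * cseq α i * exp ((i : ℝ) * s)} := by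
  have hRr := two_mul_exp_mul_exp_neg_le (x := (j : ℝ) ^ 2) (one_le_pow₀ (Nat.one_le_cast.2 hj))
  have hmR : (mseq α j : ℝ) / exp (2 * (j : ℝ) ^ 2) ≤ exp (-(j : ℝ) ^ 2) := by
    rw [div_le_iff₀ (exp_pos _), ← exp_add, show -(j : ℝ) ^ 2 + 2 * j ^ 2 = j ^ 2 by ring]
    exact hm
  calc 1 - (C₀ + 1) * exp (-(j : ℝ) ^ 2)
      ≤ 1 - μ.real {ω | |ε (mseq α j) ω| ≤ exp (-(j : ℝ) ^ 2)} -
          mseq α j / exp (2 * (j : ℝ) ^ 2) := by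
        linarith [hanti (mseq α j) _ (exp_pos (-(j : ℝ) ^ 2)).le]
    _ ≤ _ := one_sub_le_measureReal_abs_gt_and_sum_abs_le μ ε hint hmean _ (exp_pos _)
    _ ≤ _ := by
        refine measureReal_mono fun ω ⟨hr, hR⟩ s hs => sub_pos.2 ?_
        exact sum_abs_mul_cseq_lt hα0 hα1 (by positivity) hK hgap hs hr hR hRr

theorem statement11_general (α : ℝ) (hα : α ∈ Set.Ioo (0 : ℝ) 1)
    {Ω : Type*} [MeasurableSpace Ω] (μ : Measure Ω) [IsProbabilityMeasure μ]
    (ε : ℕ → Ω → ℝ)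
    (hint : ∀ k, Integrable (ε k) μ)
    (hmean : ∀ k, ∫ ω, |ε k ω| ∂μ ≤ 1)
    (C₀ : ℝ) (hC₀ : 0 < C₀)
    (hanti : ∀ k, ∀ t : ℝ, 0 ≤ t → (μ {ω | |ε k ω| ≤ t}).toReal ≤ C₀ * t) :
    ∃ C > (0 : ℝ), ∃ c > (0 : ℝ), ∀ n j : ℕ, 1 ≤ j → mseq α j ≤ n →
      1 - C * Real.exp (-c * (j : ℝ) ^ 2) ≤
        (μ {ω | ∀ s : ℝ, aseq α j ≤ s →
          0 < cseq α (mseq α j) * Real.exp ((mseq α j : ℝ) * s) * |ε (mseq α j) ω| / 2 -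
            ∑ i ∈ Finset.range (mseq α j),
              |ε i ω| * cseq α i * Real.exp ((i : ℝ) * s)}).toReal := by
  obtain ⟨J, hJ⟩ := eventually_atTop.1 <| (eventually_sq_le_aseq hα.1).and <|
    (eventually_two_pow_sub_le_mseq_sub_mul_aseq hα.1 hα.2).and (eventually_mseq_le_exp_sq α)
  refine ⟨(C₀ + 1) * exp ((J : ℝ) ^ 2), by positivity, 1, one_pos, fun n j hj _ => ?_⟩
  rw [← measureReal_def, mul_assoc, ← exp_add]
  rcases lt_or_ge j J with hjJ | hjJ
  · refine (sub_nonpos.2 ?_).trans measureReal_nonneg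
    have : (j : ℝ) ^ 2 ≤ (J : ℝ) ^ 2 := by gcongr
    nlinarith [add_one_le_exp ((J : ℝ) ^ 2 + -1 * (j : ℝ) ^ 2)]
  · obtain ⟨hK, hgap, hm⟩ := hJ j hjJ
    refine le_trans ?_
      (one_sub_mul_exp_le_measureReal hα.1 hα.2.le μ ε hint hmean hanti hj hK hgap hm)
    have : exp (-(j : ℝ) ^ 2) ≤ exp ((J : ℝ) ^ 2 + -1 * (j : ℝ) ^ 2) := by
      gcongr; nlinarith [sq_nonneg (J : ℝ)]
    nlinarith

/-- With probability at least `1 - C exp(-c j²)`: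
`inf_{s ≥ a_j} ((1/2) c_(m_j) e^(m_j s) |ε_(m_j)| - ∑_{i < m_j} |ε_i| c_i e^(i s)) > 0`. -/
theorem statement11 (α : ℝ) (hα : α ∈ Set.Ioo (0 : ℝ) 1)
    {Ω : Type*} [MeasurableSpace Ω] (μ : Measure Ω) [IsProbabilityMeasure μ]
    (ε : ℕ → Ω → ℝ) (hmeas : ∀ k, Measurable (ε k))
    (hindep : iIndepFun ε μ)
    (hident : ∀ k, IdentDistrib (ε k) (ε 0) μ μ)
    (hint : ∀ k, Integrable (ε k) μ)
    (hmean : ∀ k, ∫ ω, |ε k ω| ∂μ ≤ 1)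
    (C₀ : ℝ) (hC₀ : 0 < C₀)
    (hanti : ∀ k, ∀ t : ℝ, 0 ≤ t → (μ {ω | |ε k ω| ≤ t}).toReal ≤ C₀ * t) :
    ∃ C > (0 : ℝ), ∃ c > (0 : ℝ), ∀ n j : ℕ, 1 ≤ j → mseq α j ≤ n →
      1 - C * Real.exp (-c * (j : ℝ) ^ 2) ≤
        (μ {ω | ∀ s : ℝ, aseq α j ≤ s →
          0 < cseq α (mseq α j) * Real.exp ((mseq α j : ℝ) * s) * |ε (mseq α j) ω| / 2 -
            ∑ i ∈ Finset.range (mseq α j),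
              |ε i ω| * cseq α i * Real.exp ((i : ℝ) * s)}).toReal :=
  statement11_general α hα μ ε hint hmean C₀ hC₀ hanti
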